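/- Let F : ℂ³ → ℂ³ be defined by F(x₁,x₂,x₃) = (x₁³ − x₁x₂x₃, x₂x₃, x₃x₁). Then the asymptotic set of F equals the union of the two hyperplanes {α₁ = 0} and {α₃ = 0}: S_F = { (α₁,α₂,α₃) ∈ ℂ³ : α₁ = 0 } ∪ { (α₁,α₂,α₃) ∈ ℂ³ : α₃ = 0 }. -/

import Mathlib

open Filter Topology

/-- Evaluation of a polynomial mapping `F : ℂⁿ → ℂⁿ` given by its coordinate
polynomials `P i`. -/
noncomputable def evalMap {n : ℕ} (P : Fin n → MvPolynomial (Fin n) ℂ)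
    (x : Fin n → ℂ) : Fin n → ℂ :=
  fun i => MvPolynomial.eval x (P i)

/-- The Jacobian determinant of the polynomial mapping determined by `P`. -/
noncomputable def jacDet {n : ℕ} (P : Fin n → MvPolynomial (Fin n) ℂ)
    (x : Fin n → ℂ) : ℂ :=
  Matrix.det (Matrix.of fun i j => MvPolynomial.eval x (MvPolynomial.pderiv j (P i)))

/-- The set of critical values `K₀(F)`. -/
noncomputable def K0 {n : ℕ} (P : Fin n → MvPolynomial (Fin n) ℂ) : Set (Fin n → ℂ) :=
  evalMap P '' {x | jacDet P x = 0}

/-- The asymptotic set `S_F` of a mapping `F : ℂⁿ → ℂⁿ`. -/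
def SF {n : ℕ} (F : (Fin n → ℂ) → (Fin n → ℂ)) : Set (Fin n → ℂ) :=
  {a | ∃ x : ℕ → (Fin n → ℂ), Tendsto (fun k => ‖x k‖) atTop atTop ∧
    Tendsto (fun k => F (x k)) atTop (𝓝 a)}

open MvPolynomial in
/-- The coordinate polynomials of `F(x₁,x₂,x₃) = (x₁³ - x₁x₂x₃, x₂x₃, x₃x₁)`. -/
noncomputable def P3 : Fin 3 → MvPolynomial (Fin 3) ℂ :=
  ![X 0 ^ 3 - X 0 * X 1 * X 2, X 1 * X 2, X 2 * X 0]

/-!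
Off the two hyperplanes `F` is proper. If `F x = g` with `g₁ g₃ ≠ 0`, then `x₁` is a root of
`t³ - g₂ t = g₁`, so both `x₁` and `x₁⁻¹ = (x₁² - g₂) / g₁` are bounded in terms of `g`, and
then so are `x₃ = g₃ / x₁` and `x₂ = g₂ x₁ / g₃`. Conversely, as `s → 0` the curves
`(α₃ s, α₂ s, s⁻¹)` and `(c, s⁻¹, α₂ s)` with `c³ - α₂ c = α₁` escape to infinity while their
images tend to `(0, α₂, α₃)` and `(α₁, α₂, 0)`. (Coordinates `1, 2, 3` here are `0, 1, 2`
in Lean.)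
-/

open Asymptotics

lemma evalMap_P3 (x : Fin 3 → ℂ) :
    evalMap P3 x = ![x 0 ^ 3 - x 0 * x 1 * x 2, x 1 * x 2, x 2 * x 0] := by
  funext i; fin_cases i <;> simp [evalMap, P3]

lemma exists_pow_three_sub_mul_eq (b d : ℂ) : ∃ c : ℂ, c ^ 3 - b * c = d := by
  open Polynomial in
  have hdeg : (X ^ 3 - C b * X - C d).degree = 3 := by compute_degree!
  obtain ⟨c, hc⟩ := Complex.exists_root (f := X ^ 3 - C b * X - C d) (by rw [hdeg]; norm_num)
  exact ⟨c, by simpa [sub_eq_zero] using hc⟩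

lemma norm_le_of_pow_three_sub_mul_eq {u b d : ℂ} (h : u ^ 3 - b * u = d) :
    ‖u‖ ≤ 1 + ‖b‖ + ‖d‖ := by
  have hcube : ‖u‖ ^ 3 ≤ ‖b‖ * ‖u‖ + ‖d‖ := by
    calc ‖u‖ ^ 3 = ‖b * u + d‖ := by rw [← norm_pow, ← h, add_sub_cancel]
      _ ≤ ‖b‖ * ‖u‖ + ‖d‖ := (norm_add_le _ _).trans_eq (by rw [norm_mul])
  by_contra! hlt
  have h1 : 1 ≤ ‖u‖ := by linarith [norm_nonneg b, norm_nonneg d]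
  nlinarith [mul_le_mul_of_nonneg_right h1 (norm_nonneg d),
    mul_le_mul_of_nonneg_left hlt.le (by positivity : 0 ≤ ‖u‖ ^ 2)]

lemma mem_SF_of_tendsto {n : ℕ} {F : (Fin n → ℂ) → Fin n → ℂ} {a : Fin n → ℂ}
    {ι : Type*} {l : Filter ι} [l.IsCountablyGenerated] [l.NeBot] {γ : ι → Fin n → ℂ}
    (hγ : Tendsto (‖γ ·‖) l atTop) (hF : Tendsto (F ∘ γ) l (𝓝 a)) : a ∈ SF F := by
  obtain ⟨s, hs⟩ := l.exists_seq_tendsto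
  exact ⟨γ ∘ s, hγ.comp hs, hF.comp hs⟩

lemma tendsto_norm_of_apply_eq_inv {n : ℕ} {γ : ℂ → Fin n → ℂ} (i : Fin n)
    (hγ : ∀ s, γ s i = s⁻¹) : Tendsto (‖γ ·‖) (𝓝[≠] 0) atTop := by
  refine tendsto_atTop_mono (fun s => ?_)
    (tendsto_norm_cobounded_atTop.comp tendsto_inv₀_nhdsNE_zero)
  simpa [hγ] using norm_le_pi_norm (γ s) i

lemma mem_SF_P3_of_apply_zero_eq_zero {a : Fin 3 → ℂ} (ha : a 0 = 0) :
    a ∈ SF (evalMap P3) := by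
  refine mem_SF_of_tendsto (γ := fun s => ![a 2 * s, a 1 * s, s⁻¹])
    (tendsto_norm_of_apply_eq_inv 2 fun s => rfl) ?_
  have hlim : Tendsto (fun s : ℂ => ![a 2 ^ 3 * s ^ 3 - a 1 * a 2 * s, a 1, a 2])
      (𝓝[≠] 0) (𝓝 a) := by
    apply tendsto_nhdsWithin_of_tendsto_nhds
    convert (by fun_prop : Continuous fun s : ℂ =>
      ![a 2 ^ 3 * s ^ 3 - a 1 * a 2 * s, a 1, a 2]).tendsto 0
    ext i; fin_cases i <;> simp [ha]
  refine hlim.congr' (eventually_mem_nhdsWithin.mono fun s (hs : s ≠ 0) => ?_)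
  simp only [Function.comp, evalMap_P3]
  ext i; fin_cases i <;> simp <;> field_simp

lemma mem_SF_P3_of_apply_two_eq_zero {a : Fin 3 → ℂ} (ha : a 2 = 0) :
    a ∈ SF (evalMap P3) := by
  obtain ⟨c, hc⟩ := exists_pow_three_sub_mul_eq (a 1) (a 0)
  refine mem_SF_of_tendsto (γ := fun s => ![c, s⁻¹, a 1 * s])
    (tendsto_norm_of_apply_eq_inv 1 fun s => rfl) ?_
  have hlim : Tendsto (fun s : ℂ => ![c ^ 3 - a 1 * c, a 1, a 1 * c * s]) (𝓝[≠] 0) (𝓝 a) := by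
    apply tendsto_nhdsWithin_of_tendsto_nhds
    convert (by fun_prop : Continuous fun s : ℂ =>
      ![c ^ 3 - a 1 * c, a 1, a 1 * c * s]).tendsto 0
    ext i; fin_cases i <;> simp [ha, hc]
  refine hlim.congr' (eventually_mem_nhdsWithin.mono fun s (hs : s ≠ 0) => ?_)
  simp only [Function.comp, evalMap_P3]
  ext i; fin_cases i <;> simp <;> field_simp

lemma coords_eq_of_evalMap_P3_eq {x g : Fin 3 → ℂ} (hx : evalMap P3 x = g) (h0 : g 0 ≠ 0)
    (h2 : g 2 ≠ 0) : (x 0)⁻¹ = (x 0 ^ 2 - g 1) * (g 0)⁻¹ ∧ x 1 = g 1 * x 0 * (g 2)⁻¹ ∧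
      x 2 = g 2 * (x 0)⁻¹ := by
  subst hx
  simp only [evalMap_P3, Matrix.cons_val] at h0 h2 ⊢
  rw [show x 0 ^ 3 - x 0 * x 1 * x 2 = x 0 * (x 0 ^ 2 - x 1 * x 2) by ring] at h0 ⊢
  obtain ⟨hx0, hx0'⟩ := mul_ne_zero_iff.1 h0
  have hx2 : x 2 ≠ 0 := left_ne_zero_of_mul h2
  refine ⟨?_, ?_, ?_⟩ <;> field_simp

lemma isBigO_one_of_tendsto_evalMap_P3 {ι : Type*} {l : Filter ι} {x : ι → Fin 3 → ℂ}
    {a : Fin 3 → ℂ} (hx : Tendsto (fun k => evalMap P3 (x k)) l (𝓝 a)) (h0 : a 0 ≠ 0)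
    (h2 : a 2 ≠ 0) : x =O[l] (fun _ => (1 : ℝ)) := by
  set g := fun k => evalMap P3 (x k) with hg_def
  have hg : ∀ i, Tendsto (g · i) l (𝓝 (a i)) := tendsto_pi_nhds.1 hx
  have hO : ∀ i, (g · i) =O[l] (fun _ => (1 : ℝ)) := fun i => (hg i).isBigO_one ℝ
  have hO_inv : ∀ i, a i ≠ 0 → (fun k => (g k i)⁻¹) =O[l] (fun _ => (1 : ℝ)) :=
    fun i hi => ((hg i).inv₀ hi).isBigO_one ℝ
  have hcoords : ∀ᶠ k in l, (x k 0)⁻¹ = (x k 0 ^ 2 - g k 1) * (g k 0)⁻¹ ∧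
      x k 1 = g k 1 * x k 0 * (g k 2)⁻¹ ∧ x k 2 = g k 2 * (x k 0)⁻¹ := by
    filter_upwards [(hg 0).eventually_ne h0, (hg 2).eventually_ne h2] with k hk0 hk2
    exact coords_eq_of_evalMap_P3_eq rfl hk0 hk2
  have hu : (x · 0) =O[l] (fun _ => (1 : ℝ)) := by
    refine (isBigO_of_le l fun k => ?_).trans_tendsto_nhds ℝ
      (((hg 1).norm.const_add 1).add (hg 0).norm)
    rw [Real.norm_of_nonneg (by positivity)]
    exact norm_le_of_pow_three_sub_mul_eq (by simp [hg_def, evalMap_P3]; ring)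
  have hu_inv : (fun k => (x k 0)⁻¹) =O[l] (fun _ => (1 : ℝ)) := by
    have hu2 : (fun k => x k 0 ^ 2) =O[l] (fun _ => (1 : ℝ)) := by simpa using hu.pow 2
    have : (fun k => (x k 0 ^ 2 - g k 1) * (g k 0)⁻¹) =O[l] (fun _ => (1 : ℝ)) := by
      simpa using (hu2.sub (hO 1)).mul (hO_inv 0 h0)
    exact this.congr' (hcoords.mono fun k hk => hk.1.symm) .rfl
  have hv : (x · 1) =O[l] (fun _ => (1 : ℝ)) := by
    have : (fun k => g k 1 * x k 0 * (g k 2)⁻¹) =O[l] (fun _ => (1 : ℝ)) := by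
      simpa using ((hO 1).mul hu).mul (hO_inv 2 h2)
    exact this.congr' (hcoords.mono fun k hk => hk.2.1.symm) .rfl
  have hw : (x · 2) =O[l] (fun _ => (1 : ℝ)) := by
    have : (fun k => g k 2 * (x k 0)⁻¹) =O[l] (fun _ => (1 : ℝ)) := by
      simpa using (hO 2).mul hu_inv
    exact this.congr' (hcoords.mono fun k hk => hk.2.2.symm) .rfl
  exact isBigO_pi.2 (Fin.forall_fin_succ.2
    ⟨hu, Fin.forall_fin_succ.2 ⟨hv, Fin.forall_fin_one.2 hw⟩⟩)

/-- the asymptotic set of `F = (x₁³ - x₁x₂x₃, x₂x₃, x₃x₁)` is the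
union of the hyperplanes `{α₁ = 0}` and `{α₃ = 0}`. -/
theorem SF_P3 :
    SF (evalMap P3) = {a : Fin 3 → ℂ | a 0 = 0} ∪ {a : Fin 3 → ℂ | a 2 = 0} := by
  ext a
  refine ⟨fun ⟨x, hx, hFx⟩ => ?_, ?_⟩
  · by_contra! h
    rw [Set.mem_union, not_or] at h
    exact not_isBoundedUnder_of_tendsto_atTop hx
      ((isBigO_one_iff ℝ).1 (isBigO_one_of_tendsto_evalMap_P3 hFx h.1 h.2))
  · rintro (ha | ha)
    exacts [mem_SF_P3_of_apply_zero_eq_zero ha, mem_SF_P3_of_apply_two_eq_zero ha]
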